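/- Let A, B, E, F be words over {+,-,*} such that A' = E' and B' = F' (equal *-deletions), and suppose the cyclic words A+B** and E-F** represent the same cycle, i.e. one of E-F** or its dual is a rotation of A+B**. Then B**A equals the dual of E**F, i.e. B**A = Ē**F̄. -/

import Mathlib

inductive Symb : Type
  | plus | minus | star
deriving DecidableEq


/-- the dual of a symbol: `+` ↦ `-`, `-` ↦ `+`, `*` ↦ `*` -/
def dualSym : Symb → Symb
  | Symb.plus => Symb.minus
  | Symb.minus => Symb.plus
  | Symb.star => Symb.star

/-- the dual (involution) of a word: reverse and dualize each symbol -/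
def dualWord (W : List Symb) : List Symb := (W.map dualSym).reverse

/-- the arc relation of the reflexive path `P(W)` on vertices `{0,…,|W|}` -/
def pathArc (W : List Symb) (i j : ℕ) : Prop :=
  i ≤ W.length ∧ j ≤ W.length ∧
    (i = j ∨ (j = i + 1 ∧ (W[i]? = some Symb.plus ∨ W[i]? = some Symb.star))
           ∨ (i = j + 1 ∧ (W[j]? = some Symb.minus ∨ W[j]? = some Symb.star)))

/-- `f` is an end-point preserving homomorphism from the path `P(V)` onto the path `P(U)` -/
def EPHom (V U : List Symb) (f : ℕ → ℕ) : Prop :=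
  f 0 = 0 ∧ f V.length = U.length ∧
  (∀ i j, pathArc V i j → pathArc U (f i) (f j)) ∧
  (∀ m, m ≤ U.length → ∃ i, i ≤ V.length ∧ f i = m)

/-- the order on words: `U ≤ V` iff there is an end-point preserving
homomorphism from `P(V)` onto `P(U)` -/
def wle (U V : List Symb) : Prop := ∃ f, EPHom V U f

/-- the star-deletion of a word -/
def starDel (W : List Symb) : List Symb := W.filter (fun s => s ≠ Symb.star)

/-- `W` and `Z` represent the same cycle: `Z` or its dual is a rotation of `W` -/
def SameCycle (W Z : List Symb) : Prop :=
  ∃ U V : List Symb, W = U ++ V ∧ (Z = V ++ U ∨ dualWord Z = V ++ U)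

/-!
A rotation preserves the number of `+`, so `E-F**` is not a rotation of `A+B** = UV`; hence its
dual `**F̄+Ē` is `VU`. Deleting stars, `a+b` rotated becomes the dual of `a-b`, a word differing
from `a+b` only at the marked position. Rotation followed by duality is a reflection of the cycle,
hence an involution on positions; it sends the marked `-` of `a-b` to a `+` of `a+b`, and if that
`+` were not the marked one, the reflection would send it back to a `-` sitting at the marked `+`.
So the rotation aligns the two marked symbols, and cutting both cycles right after them (matching
up to the marker by counting non-star symbols) gives `B**A+ = Ē**F̄+`.
-/

@[simp] lemma starDel_nil : starDel [] = [] := rfl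

@[simp] lemma starDel_append (X Y : List Symb) : starDel (X ++ Y) = starDel X ++ starDel Y :=
  List.filter_append ..

@[simp] lemma starDel_cons_star (X : List Symb) : starDel (Symb.star :: X) = starDel X := by
  simp [starDel]

lemma starDel_cons_of_ne {s : Symb} (hs : s ≠ Symb.star) (X : List Symb) :
    starDel (s :: X) = s :: starDel X := by
  simp [starDel, hs]

lemma starDel_dualWord (X : List Symb) : starDel (dualWord X) = dualWord (starDel X) := by
  simp only [starDel, dualWord, List.filter_reverse, List.filter_map]
  congr 3
  funext s
  cases s <;> rfl

@[simp] lemma length_dualWord (X : List Symb) : (dualWord X).length = X.length := by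
  simp [dualWord]

lemma count_starDel {s : Symb} (hs : s ≠ Symb.star) (X : List Symb) :
    (starDel X).count s = X.count s :=
  List.count_filter (by simpa using hs)

lemma getElem?_dualWord {X : List Symb} {k : ℕ} (hk : k < X.length) :
    (dualWord X)[k]? = X[X.length - 1 - k]?.map dualSym := by
  simp [dualWord, List.getElem?_reverse (l := X.map dualSym) (by simpa using hk)]

lemma length_add_mod_eq_of_rotate_eq_dualWord (a b : List Symb) (r : ℕ)
    (h : (a ++ Symb.plus :: b).rotate r = dualWord (a ++ Symb.minus :: b)) :
    (b.length + r) % (a.length + b.length + 1) = a.length := by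
  set x := a ++ Symb.plus :: b
  set m := a.length + b.length + 1
  have hy : a ++ Symb.minus :: b = x.set a.length Symb.minus := by simp [x]
  have hxm : x.length = m := by simp [x, m]; omega
  have hxa : x[a.length]? = some Symb.plus := by simp [x]
  have hread : ∀ k < m,
      x[(k + r) % m]? = (x.set a.length Symb.minus)[m - 1 - k]?.map dualSym := by
    intro k hk
    rw [← hxm, ← List.getElem?_rotate (by omega), h, hy, getElem?_dualWord (by simp; omega)]
    simp [hxm]
  by_contra hne
  set q := (b.length + r) % m
  have hq : q < m := Nat.mod_lt _ (by omega)
  have hxq : x[q]? = some Symb.plus := by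
    have := hread b.length (by omega)
    rwa [show m - 1 - b.length = a.length by omega, List.getElem?_set_self (by omega)] at this
  have hback : (m - 1 - q + r) % m = a.length := by
    have := Nat.div_add_mod (b.length + r) m
    rw [show m - 1 - q + r = a.length + m * ((b.length + r) / m) by omega,
      Nat.add_mul_mod_self_left, Nat.mod_eq_of_lt (by omega)]
  have := hread (m - 1 - q) (by omega)
  rw [hback, hxa, show m - 1 - (m - 1 - q) = q by omega, List.getElem?_set_ne (Ne.symm hne),
    hxq] at this
  simp [dualSym] at this

lemma append_cons_inj_of_length_starDel_eq {s : Symb} (hs : s ≠ Symb.star)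
    {X Y X' Y' : List Symb} (h : X ++ s :: Y = X' ++ s :: Y')
    (hl : (starDel X).length = (starDel X').length) : X = X' ∧ Y = Y' := by
  induction X generalizing X' with
  | nil =>
    cases X' with
    | nil => simpa using h
    | cons t X' =>
      obtain ⟨rfl, -⟩ := List.cons_eq_cons.mp h
      simp [starDel_cons_of_ne hs] at hl
  | cons t X ih =>
    cases X' with
    | nil =>
      obtain ⟨rfl, -⟩ := List.cons_eq_cons.mp h
      simp [starDel_cons_of_ne hs] at hl
    | cons t' X' =>
      simp only [List.cons_append, List.cons.injEq] at h
      obtain ⟨rfl, h⟩ := h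
      have hl : (starDel X).length = (starDel X').length := by
        by_cases ht : t = Symb.star
        · simpa [ht] using hl
        · simpa [starDel_cons_of_ne ht] using hl
      obtain ⟨rfl, rfl⟩ := ih h hl
      exact ⟨rfl, rfl⟩

lemma append_comm_eq_of_marker_aligned {s : Symb} (hs : s ≠ Symb.star)
    {U V P Q P' Q' : List Symb} (h : U ++ V = P ++ s :: Q) (h' : V ++ U = P' ++ s :: Q')
    (hpos : ((starDel P').length + (starDel U).length) % (starDel (U ++ V)).length =
      (starDel P).length) :
    Q ++ P = Q' ++ P' := by
  have hm : (starDel (U ++ V)).length = (starDel P).length + 1 + (starDel Q).length := by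
    simp [h, starDel_cons_of_ne hs]; omega
  have hm' : (starDel (U ++ V)).length = (starDel P').length + 1 + (starDel Q').length := by
    have := congrArg (fun W => (starDel W).length) h'
    simp [starDel_cons_of_ne hs] at this ⊢; omega
  have hshift : (starDel P').length + (starDel U).length = (starDel P).length ∨
      (starDel P').length + (starDel U).length =
        (starDel P).length + (starDel (U ++ V)).length := by
    have hu : (starDel U).length ≤ (starDel (U ++ V)).length := by simp
    rcases lt_or_ge ((starDel P').length + (starDel U).length) (starDel (U ++ V)).length
      with hlt | hge
    · rw [Nat.mod_eq_of_lt hlt] at hpos; omega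
    · rw [Nat.mod_eq_sub_mod hge, Nat.mod_eq_of_lt (by omega)] at hpos; omega
  rcases List.append_eq_append_iff.mp h with ⟨P₂, rfl, rfl⟩ | ⟨_ | ⟨t, Q₁⟩, rfl, hC⟩
  · obtain ⟨rfl, rfl⟩ := append_cons_inj_of_length_starDel_eq (X := P₂) hs (by simpa using h')
      (by simp [starDel_cons_of_ne hs] at hm hm' hshift; omega)
    simp
  · simp only [List.append_nil] at hC h' ⊢
    subst hC
    obtain ⟨rfl, rfl⟩ := append_cons_inj_of_length_starDel_eq (X := []) hs h'
      (by simp only [starDel_append, starDel_cons_of_ne hs, List.length_append,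
        List.length_cons, starDel_nil, List.length_nil] at hm hm' hshift ⊢; omega)
    simp
  · obtain ⟨rfl, rfl⟩ := List.cons_eq_cons.mp hC
    obtain ⟨rfl, rfl⟩ := append_cons_inj_of_length_starDel_eq (X := V ++ P) hs
      (by simpa using h') (by simp [starDel_cons_of_ne hs] at hm hm' hshift ⊢; omega)
    simp

/-- If `A' = E'`, `B' = F'` and `C(A+B**) = C(E-F**)`, then `B**A = Ē**F̄`. -/
theorem stmt_10 (A B E F : List Symb)
    (hAE : starDel A = starDel E) (hBF : starDel B = starDel F)
    (h : SameCycle (A ++ Symb.plus :: (B ++ [Symb.star, Symb.star]))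
                   (E ++ Symb.minus :: (F ++ [Symb.star, Symb.star]))) :
    B ++ [Symb.star, Symb.star] ++ A =
      dualWord E ++ [Symb.star, Symb.star] ++ dualWord F := by
  obtain ⟨U, V, hW, hZ | hZ⟩ := h
  · have hcount := (List.perm_append_comm (l₁ := U) (l₂ := V)).count_eq Symb.plus
    rw [← hW, ← hZ] at hcount
    have hA := congrArg (List.count Symb.plus) hAE
    have hB := congrArg (List.count Symb.plus) hBF
    simp only [count_starDel (by decide : Symb.plus ≠ Symb.star)] at hA hB
    simp only [List.count_append, List.count_cons, List.count_nil, beq_iff_eq, reduceCtorEq,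
      if_true, if_false] at hcount
    omega
  · have hx : starDel U ++ starDel V = starDel A ++ Symb.plus :: starDel B := by
      rw [← starDel_append, ← hW]; simp [starDel_cons_of_ne]
    have hy : starDel V ++ starDel U = dualWord (starDel A ++ Symb.minus :: starDel B) := by
      rw [← starDel_append, ← hZ, starDel_dualWord, hAE, hBF]; simp [starDel_cons_of_ne]
    have hkey := length_add_mod_eq_of_rotate_eq_dualWord _ _ _
      (by rw [← hx, List.rotate_append_length_eq, hy])
    have hdual : V ++ U = [Symb.star, Symb.star] ++ dualWord F ++ Symb.plus :: dualWord E := by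
      rw [← hZ]; simp [dualWord, dualSym]
    have hm : (starDel (U ++ V)).length = (starDel A).length + (starDel B).length + 1 := by
      rw [starDel_append, hx]; simp only [List.length_append, List.length_cons]; omega
    simpa using append_comm_eq_of_marker_aligned (by decide) hW.symm hdual (by
      rw [hm]; simpa [starDel_dualWord, ← hBF] using hkey)
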